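/- If n is even, or n ≡ 3 (mod 4), then the center of the Lie algebra G = {ξ ∈ Cl(V,Q) : c(ξ) = -ξ} is {0}; if n ≡ 1 (mod 4), the center of G is the one-dimensional span of ω = e₁⋯eₙ. -/

import Mathlib

open CliffordAlgebra

section Defs

variable {F V : Type*} [Field F] [AddCommGroup V] [Module F V]

/-- The monomial `e_I` associated to a multi-index `I`, realized as a finite set of
indices multiplied in increasing order (with `e_∅ = 1`). -/
noncomputable def eI (Qf : QuadraticForm F V) {n : ℕ} (b : Module.Basis (Fin n) F V)
    (s : Finset (Fin n)) : CliffordAlgebra Qf :=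
  ((s.sort (· ≤ ·)).map fun i => ι Qf (b i)).prod

/-- The conjugation anti-automorphism `c = α ∘ τ` of the Clifford algebra. -/
noncomputable def cconj (Qf : QuadraticForm F V) :
    CliffordAlgebra Qf →ₗ[F] CliffordAlgebra Qf :=
  involute.toLinearMap ∘ₗ (reverse (Q := Qf))

/-- The canonical bilinear form `Q̄(x,y) = p(x · c(y))`, where `p` is the scalar-component
projection determined by a monomial basis `bas` (indexed by multi-indices, with
`bas s = e_s`, in particular `bas ∅ = 1`). -/
noncomputable def Qbar {Qf : QuadraticForm F V} {n : ℕ}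
    (bas : Module.Basis (Finset (Fin n)) F (CliffordAlgebra Qf))
    (x y : CliffordAlgebra Qf) : F :=
  bas.coord ∅ (x * cconj Qf y)

/-- The Lie algebra `G = {ξ : c(ξ) = -ξ}` of infinitesimal isometries, as a submodule. -/
noncomputable def Gsub (Qf : QuadraticForm F V) : Submodule F (CliffordAlgebra Qf) :=
  LinearMap.ker (cconj Qf + LinearMap.id)

end Defs

/-!
Every generator `eᵢ = ι (b i)` lies in `G`, so a central element `ξ` of `G` commutes with all
`eᵢ`. With `eᵢ² = Q(bᵢ) ≠ 0`, the average `x ↦ ½ (x + eᵢ x eᵢ⁻¹)` fixes `ξ`, fixes the monomials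
`e_s` commuting with `eᵢ` and kills those anticommuting with it. Composing these averages over all
`i` and using only that the monomials span `Cl(V,Q)`, `ξ` lies in the span of the monomials
commuting with every `eᵢ`: these are `1` and, for odd `n`, `ω`. Finally `c(1) = 1` and
`c(ω) = (-1)^(n(n+1)/2) ω`, which is `-ω` exactly when `n ≡ 1 (mod 4)`.
-/

section ConjugationAverage

variable {F A : Type*} [Field F] [Ring A] [Algebra F A]

/-- For `e * e = algebraMap q`, this is `x ↦ ½ (x + e x e⁻¹)`. -/
noncomputable def conjAvg (e : A) (q : F) : A →ₗ[F] A :=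
  (2 : F)⁻¹ • (LinearMap.id + q⁻¹ • (LinearMap.mulLeft F e ∘ₗ LinearMap.mulRight F e))

lemma conjAvg_apply (e : A) (q : F) (x : A) :
    conjAvg e q x = (2 : F)⁻¹ • (x + q⁻¹ • (e * (x * e))) := rfl

lemma conjAvg_of_commute {e x : A} {q : F} (h2 : (2 : F) ≠ 0) (hq : q ≠ 0)
    (he : e * e = algebraMap F A q) (hx : Commute e x) : conjAvg e q x = x := by
  rw [conjAvg_apply, ← hx.eq, ← mul_assoc, he, ← Algebra.smul_def, inv_smul_smul₀ hq,
    ← two_smul F, inv_smul_smul₀ h2]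

lemma conjAvg_of_anticommute {e x : A} {q : F} (hq : q ≠ 0)
    (he : e * e = algebraMap F A q) (hx : e * x = -(x * e)) : conjAvg e q x = 0 := by
  rw [conjAvg_apply, ← neg_eq_iff_eq_neg.mpr hx, mul_neg, ← mul_assoc, he,
    ← Algebra.smul_def, smul_neg, inv_smul_smul₀ hq, add_neg_cancel, smul_zero]

end ConjugationAverage

lemma eq_zero_of_eq_neg {F M : Type*} [Field F] [AddCommGroup M] [Module F M]
    (h2 : (2 : F) ≠ 0) {x : M} (h : x = -x) : x = 0 := by
  have h2x : (2 : F) • x = 0 := by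
    rw [two_smul]
    nth_rewrite 1 [h]
    exact neg_add_cancel x
  exact (smul_eq_zero.mp h2x).resolve_left h2

lemma even_choose_two_add_self_iff (n : ℕ) : Even (n.choose 2 + n) ↔ n % 4 = 0 ∨ n % 4 = 3 := by
  have h : (n.choose 2 + n) * 2 = n * (n + 1) := by
    rw [Nat.choose_two_right, add_mul, Nat.div_mul_cancel (Nat.even_mul_pred_self n).two_dvd]
    cases n with
    | zero => rfl
    | succ m => simp; ring
  have h4 : n * (n + 1) % 4 = n % 4 * (n % 4 + 1) % 4 := by simp [Nat.mul_mod, Nat.add_mod]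
  rw [Nat.even_iff]
  have : n % 4 < 4 := Nat.mod_lt _ (by norm_num)
  interval_cases hr : n % 4 <;> omega

lemma eq_empty_or_eq_univ_of_forall_even_card_erase {n : ℕ} {s : Finset (Fin n)}
    (h : ∀ i, Even (s.erase i).card) : s = ∅ ∨ (s = Finset.univ ∧ Odd n) := by
  rcases s.eq_empty_or_nonempty with rfl | ⟨i, hi⟩
  · exact Or.inl rfl
  obtain ⟨r, hr⟩ := h i
  rw [Finset.card_erase_of_mem hi] at hr
  have hpos := Finset.card_pos.mpr ⟨i, hi⟩
  by_cases hs : s = Finset.univ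
  · rw [hs, Finset.card_univ, Fintype.card_fin] at hr hpos
    exact Or.inr ⟨hs, r, by omega⟩
  · obtain ⟨j, hj⟩ : ∃ j, j ∉ s := by
      by_contra! hall
      exact hs (Finset.eq_univ_iff_forall.mpr hall)
    obtain ⟨r', hr'⟩ := h j
    rw [Finset.erase_eq_of_notMem hj] at hr'
    omega

section Clifford

variable {F V : Type*} [Field F] [AddCommGroup V] [Module F V]
  {Qf : QuadraticForm F V} {n : ℕ} {b : Module.Basis (Fin n) F V}

lemma eI_empty : eI Qf b ∅ = 1 := by simp [eI]

lemma eI_insert_of_forall_lt {i : Fin n} {s : Finset (Fin n)} (h : ∀ j ∈ s, i < j) :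
    eI Qf b (insert i s) = ι Qf (b i) * eI Qf b s := by
  rw [eI, Finset.sort_insert _ (fun j hj => (h j hj).le) (fun hi => lt_irrefl i (h i hi))]
  simp [eI]

lemma ι_eq_sum_repr (v : V) : ι Qf v = ∑ i, b.repr v i • ι Qf (b i) := by
  conv_lhs => rw [← b.sum_repr v]
  simp only [map_sum, map_smul]

lemma ι_mul_eI_mem_span_singleton (hb : Pairwise fun i j => Qf.IsOrtho (b i) (b j)) (i : Fin n)
    (s : Finset (Fin n)) : ι Qf (b i) * eI Qf b s ∈ F ∙ eI Qf b (symmDiff s {i}) := by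
  induction s using Finset.induction_on_min generalizing i with
  | empty => simp [symmDiff, eI]
  | insert a t hat ih =>
    have hat' : a ∉ t := fun h => lt_irrefl a (hat a h)
    rcases lt_trichotomy i a with hia | rfl | hai
    · have hlt : ∀ j ∈ insert a t, i < j := by
        simpa [hia] using fun j hj => hia.trans (hat j hj)
      have : symmDiff (insert a t) {i} = insert i (insert a t) := by
        ext j
        simp only [Finset.mem_symmDiff, Finset.mem_insert, Finset.mem_singleton]
        grind
      rw [this, eI_insert_of_forall_lt hlt]
      exact Submodule.mem_span_singleton_self _
    · have : symmDiff (insert i t) {i} = t := by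
        ext j
        simp only [Finset.mem_symmDiff, Finset.mem_insert, Finset.mem_singleton]
        grind
      rw [this, eI_insert_of_forall_lt hat, ← mul_assoc, ι_sq_scalar, ← Algebra.smul_def]
      exact Submodule.smul_mem _ _ (Submodule.mem_span_singleton_self _)
    · obtain ⟨c, hc⟩ := Submodule.mem_span_singleton.mp (ih i)
      have hlt : ∀ j ∈ symmDiff t {i}, a < j := by
        intro j hj
        rcases Finset.mem_symmDiff.mp hj with ⟨hj, -⟩ | ⟨hj, -⟩
        · exact hat j hj
        · rwa [Finset.mem_singleton.mp hj]
      have : symmDiff (insert a t) {i} = insert a (symmDiff t {i}) := by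
        ext j
        simp only [Finset.mem_symmDiff, Finset.mem_insert, Finset.mem_singleton]
        grind
      rw [this, eI_insert_of_forall_lt hlt, eI_insert_of_forall_lt hat,
        ι_mul_ι_mul_of_isOrtho _ (hb hai.ne'), ← hc, mul_smul_comm]
      exact Submodule.mem_span_singleton.mpr ⟨-c, by rw [neg_smul]⟩

lemma span_range_eI (hb : Pairwise fun i j => Qf.IsOrtho (b i) (b j)) :
    Submodule.span F (Set.range (eI Qf b)) = ⊤ := by
  set S := Submodule.span F (Set.range (eI Qf b))
  have hmem : ∀ s, eI Qf b s ∈ S := fun s => Submodule.subset_span ⟨s, rfl⟩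
  have hι_mul : ∀ v, S ≤ S.comap (LinearMap.mulLeft F (ι Qf v)) := by
    refine fun v => Submodule.span_le.mpr ?_
    rintro _ ⟨s, rfl⟩
    rw [SetLike.mem_coe, Submodule.mem_comap, LinearMap.mulLeft_apply, ι_eq_sum_repr (b := b),
      Finset.sum_mul]
    refine Submodule.sum_mem _ fun i _ => ?_
    rw [smul_mul_assoc]
    exact Submodule.smul_mem _ _ <| Submodule.span_singleton_le_iff_mem _ _ |>.mpr (hmem _)
      (ι_mul_eI_mem_span_singleton hb i s)
  refine Submodule.eq_top_iff'.mpr fun x => ?_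
  induction x using CliffordAlgebra.left_induction with
  | algebraMap r =>
    rw [Algebra.algebraMap_eq_smul_one, ← eI_empty (b := b)]
    exact Submodule.smul_mem _ _ (hmem _)
  | add x y hx hy => exact S.add_mem hx hy
  | ι_mul x v hx => exact hι_mul v hx

lemma prod_map_ι_mul_ι (hb : Pairwise fun i j => Qf.IsOrtho (b i) (b j)) (i : Fin n)
    (l : List (Fin n)) :
    (l.map fun j => ι Qf (b j)).prod * ι Qf (b i)
      = (-1 : F) ^ l.countP (· ≠ i) • (ι Qf (b i) * (l.map fun j => ι Qf (b j)).prod) := by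
  induction l with
  | nil => simp
  | cons j l ih =>
    rw [List.map_cons, List.prod_cons, mul_assoc, ih, mul_smul_comm, List.countP_cons]
    rcases eq_or_ne j i with rfl | hji
    · simp
    · rw [← mul_assoc, ι_mul_ι_comm_of_isOrtho (hb hji), neg_mul, mul_assoc]
      simp [hji, pow_succ]

lemma countP_sort_ne (s : Finset (Fin n)) (i : Fin n) :
    (s.sort (· ≤ ·)).countP (· ≠ i) = (s.erase i).card := by
  rw [← Finset.filter_ne', Finset.card_def, Finset.filter_val, ← Multiset.countP_eq_card_filter,
    ← Finset.sort_eq (r := (· ≤ ·)), Multiset.coe_countP]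

lemma eI_mul_ι (hb : Pairwise fun i j => Qf.IsOrtho (b i) (b j)) (s : Finset (Fin n))
    (i : Fin n) :
    eI Qf b s * ι Qf (b i) = (-1 : F) ^ (s.erase i).card • (ι Qf (b i) * eI Qf b s) := by
  rw [eI, prod_map_ι_mul_ι hb, countP_sort_ne]

lemma reverse_prod_map_ι_of_nodup (hb : Pairwise fun i j => Qf.IsOrtho (b i) (b j))
    {l : List (Fin n)} (hl : l.Nodup) :
    reverse (l.map fun j => ι Qf (b j)).prod
      = (-1 : F) ^ l.length.choose 2 • (l.map fun j => ι Qf (b j)).prod := by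
  induction l with
  | nil => simp
  | cons j l ih =>
    obtain ⟨hj, hl⟩ := List.nodup_cons.mp hl
    have hcount : l.countP (· ≠ j) = l.length :=
      List.countP_eq_length.mpr fun k hk => by simpa using ne_of_mem_of_not_mem hk hj
    rw [List.map_cons, List.prod_cons, reverse.map_mul, reverse_ι, ih hl, smul_mul_assoc,
      prod_map_ι_mul_ι hb, hcount, smul_smul, ← pow_add, List.length_cons, Nat.choose_succ_succ',
      Nat.choose_one_right, add_comm l.length]

lemma cconj_eI (hb : Pairwise fun i j => Qf.IsOrtho (b i) (b j)) (s : Finset (Fin n)) :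
    cconj Qf (eI Qf b s) = (-1 : F) ^ (s.card.choose 2 + s.card) • eI Qf b s := by
  have hrev := reverse_prod_map_ι_of_nodup hb (Finset.sort_nodup s (· ≤ ·))
  have hinv := involute_prod_map_ι (Q := Qf) ((s.sort (· ≤ ·)).map b)
  simp only [List.map_map, List.length_map, Finset.length_sort] at hrev hinv
  rw [cconj, LinearMap.comp_apply, eI, hrev, AlgHom.toLinearMap_apply, map_smul,
    show (fun j => ι Qf (b j)) = ι Qf ∘ b from rfl, hinv, smul_smul, ← pow_add]

lemma cconj_one : cconj Qf 1 = 1 := by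
  simp [cconj]

lemma cconj_ι (v : V) : cconj Qf (ι Qf v) = -ι Qf v := by
  simp [cconj]

lemma conjAvg_eI (hb : Pairwise fun i j => Qf.IsOrtho (b i) (b j)) (hQ : ∀ i, Qf (b i) ≠ 0)
    (h2 : (2 : F) ≠ 0) (i : Fin n) (s : Finset (Fin n)) :
    conjAvg (ι Qf (b i)) (Qf (b i)) (eI Qf b s)
      = if Even (s.erase i).card then eI Qf b s else 0 := by
  have hcomm := eI_mul_ι hb s i
  split_ifs with h
  · rw [h.neg_one_pow, one_smul] at hcomm
    exact conjAvg_of_commute h2 (hQ i) (ι_sq_scalar _ _) hcomm.symm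
  · rw [(Nat.not_even_iff_odd.mp h).neg_one_pow, neg_one_smul] at hcomm
    exact conjAvg_of_anticommute (hQ i) (ι_sq_scalar _ _) (by rw [hcomm, neg_neg])

lemma mem_span_eI_of_forall_commute (hb : Pairwise fun i j => Qf.IsOrtho (b i) (b j))
    (hQ : ∀ i, Qf (b i) ≠ 0) (h2 : (2 : F) ≠ 0) {ξ : CliffordAlgebra Qf}
    (hξ : ∀ i, Commute (ι Qf (b i)) ξ) :
    ξ ∈ Submodule.span F (eI Qf b '' {s | ∀ i, Even (s.erase i).card}) := by
  set T := Submodule.span F (eI Qf b '' {s | ∀ i, Even (s.erase i).card})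
  let avg : List (Fin n) → Module.End F (CliffordAlgebra Qf) :=
    fun l => (l.map fun i => conjAvg (ι Qf (b i)) (Qf (b i))).prod
  have havg_ξ : ∀ l, avg l ξ = ξ := by
    intro l
    induction l with
    | nil => rfl
    | cons i l ih =>
      simp only [avg, List.map_cons, List.prod_cons, Module.End.mul_apply] at ih ⊢
      rw [ih, conjAvg_of_commute h2 (hQ i) (ι_sq_scalar _ _) (hξ i)]
  have havg_eI : ∀ l s, avg l (eI Qf b s)
      = if ∀ i ∈ l, Even (s.erase i).card then eI Qf b s else 0 := by
    intro l s
    induction l with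
    | nil => simp [avg]
    | cons i l ih =>
      simp only [avg, List.map_cons, List.prod_cons, Module.End.mul_apply] at ih ⊢
      rw [ih]
      simp only [List.forall_mem_cons]
      split_ifs <;> simp_all [conjAvg_eI hb hQ h2]
  have hrange : Submodule.span F (Set.range (eI Qf b)) ≤ T.comap (avg (List.finRange n)) := by
    refine Submodule.span_le.mpr ?_
    rintro _ ⟨s, rfl⟩
    rw [SetLike.mem_coe, Submodule.mem_comap, havg_eI]
    split_ifs with h
    · exact Submodule.subset_span ⟨s, fun i => h i (List.mem_finRange i), rfl⟩
    · exact T.zero_mem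
  rw [span_range_eI hb] at hrange
  have hξT := hrange (Submodule.mem_top (x := ξ))
  rwa [Submodule.mem_comap, havg_ξ] at hξT

lemma mem_span_one_eI_univ_of_forall_commute (hb : Pairwise fun i j => Qf.IsOrtho (b i) (b j))
    (hQ : ∀ i, Qf (b i) ≠ 0) (h2 : (2 : F) ≠ 0) {ξ : CliffordAlgebra Qf}
    (hξ : ∀ i, Commute (ι Qf (b i)) ξ) :
    ξ ∈ Submodule.span F {1, eI Qf b Finset.univ} := by
  refine Submodule.span_mono ?_ (mem_span_eI_of_forall_commute hb hQ h2 hξ)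
  rintro _ ⟨s, hs, rfl⟩
  rcases eq_empty_or_eq_univ_of_forall_even_card_erase hs with rfl | ⟨rfl, -⟩
  · exact Or.inl eI_empty
  · exact Or.inr rfl

lemma mem_span_one_of_forall_commute (hb : Pairwise fun i j => Qf.IsOrtho (b i) (b j))
    (hQ : ∀ i, Qf (b i) ≠ 0) (h2 : (2 : F) ≠ 0) (hn : Even n) {ξ : CliffordAlgebra Qf}
    (hξ : ∀ i, Commute (ι Qf (b i)) ξ) :
    ξ ∈ F ∙ 1 := by
  refine Submodule.span_mono ?_ (mem_span_eI_of_forall_commute hb hQ h2 hξ)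
  rintro _ ⟨s, hs, rfl⟩
  rcases eq_empty_or_eq_univ_of_forall_even_card_erase hs with rfl | ⟨-, hodd⟩
  · exact eI_empty
  · exact absurd hn (Nat.not_even_iff_odd.mpr hodd)

lemma commute_eI_univ (hb : Pairwise fun i j => Qf.IsOrtho (b i) (b j)) (hn : Odd n)
    (x : CliffordAlgebra Qf) : Commute (eI Qf b Finset.univ) x := by
  have hι : ∀ i, Commute (eI Qf b Finset.univ) (ι Qf (b i)) := by
    intro i
    have h : Even (Finset.univ.erase i).card := by
      rw [Finset.card_erase_of_mem (Finset.mem_univ i), Finset.card_univ, Fintype.card_fin]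
      exact Nat.Odd.sub_odd hn odd_one
    rw [Commute, SemiconjBy, eI_mul_ι hb, h.neg_one_pow, one_smul]
  induction x using CliffordAlgebra.induction with
  | algebraMap r => exact Algebra.commute_algebraMap_right r _
  | ι v =>
    rw [ι_eq_sum_repr (b := b)]
    exact Commute.sum_right _ _ _ fun i _ => (hι i).smul_right _
  | mul x y hx hy => exact hx.mul_right hy
  | add x y hx hy => exact hx.add_right hy

end Clifford

theorem stmt17_general {F V : Type*} [Field F] [AddCommGroup V] [Module F V]
    (h2 : (2 : F) ≠ 0)
    (B : LinearMap.BilinForm F V)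
    (hnd : ∀ v : V, (∀ w : V, B v w = 0) → v = 0)
    (Qf : QuadraticForm F V) (hQ : ∀ v : V, Qf v = -(B v v))
    {n : ℕ} (b : Module.Basis (Fin n) F V)
    (hortho : ∀ i j : Fin n, i ≠ j → B (b i) (b j) = 0) :
    ((Even n ∨ n % 4 = 3) →
      {ξ : CliffordAlgebra Qf | cconj Qf ξ = -ξ ∧
          ∀ η : CliffordAlgebra Qf, cconj Qf η = -η → ξ * η = η * ξ} = {0}) ∧
    (n % 4 = 1 →
      {ξ : CliffordAlgebra Qf | cconj Qf ξ = -ξ ∧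
          ∀ η : CliffordAlgebra Qf, cconj Qf η = -η → ξ * η = η * ξ}
        = ↑(Submodule.span F {eI Qf b Finset.univ})) := by
  have hb : Pairwise fun i j => Qf.IsOrtho (b i) (b j) := fun i j hij => by
    simp [QuadraticMap.isOrtho_def, hQ, hortho i j hij, hortho j i hij.symm, add_comm]
  have hQb : ∀ i, Qf (b i) ≠ 0 := fun i => by
    rw [hQ, neg_ne_zero]
    exact LinearMap.IsOrthoᵢ.not_isOrtho_basis_self_of_separatingLeft hortho hnd i
  have hcomm : ∀ ξ : CliffordAlgebra Qf, (∀ η, cconj Qf η = -η → ξ * η = η * ξ) →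
      ∀ i, Commute (ι Qf (b i)) ξ := fun ξ hξ i => (hξ _ (cconj_ι _)).symm
  have hω : cconj Qf (eI Qf b Finset.univ)
      = (-1 : F) ^ (n.choose 2 + n) • eI Qf b Finset.univ := by
    simpa using cconj_eI hb Finset.univ
  refine ⟨fun hn => ?_, fun hn => ?_⟩
  · refine Set.eq_singleton_iff_unique_mem.mpr ⟨⟨by simp, by simp⟩, fun ξ ⟨hξ, hξc⟩ => ?_⟩
    suffices cconj Qf ξ = ξ from eq_zero_of_eq_neg h2 (this.symm.trans hξ)
    rcases hn with hn | hn
    · obtain ⟨a, rfl⟩ := Submodule.mem_span_singleton.mp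
        (mem_span_one_of_forall_commute hb hQb h2 hn (hcomm ξ hξc))
      rw [map_smul, cconj_one]
    · obtain ⟨a, c, rfl⟩ := Submodule.mem_span_pair.mp
        (mem_span_one_eI_univ_of_forall_commute hb hQb h2 (hcomm ξ hξc))
      rw [map_add, map_smul, map_smul, hω, cconj_one,
        ((even_choose_two_add_self_iff n).mpr (Or.inr hn)).neg_one_pow, one_smul]
  · have hodd : Odd (n.choose 2 + n) :=
      Nat.not_even_iff_odd.mp (by rw [even_choose_two_add_self_iff]; omega)
    rw [hodd.neg_one_pow, neg_one_smul] at hω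
    ext ξ
    constructor
    · rintro ⟨hξ, hξc⟩
      obtain ⟨a, c, rfl⟩ := Submodule.mem_span_pair.mp
        (mem_span_one_eI_univ_of_forall_commute hb hQb h2 (hcomm _ hξc))
      have ha : a • (1 : CliffordAlgebra Qf) = 0 := by
        refine eq_zero_of_eq_neg h2 ?_
        rw [map_add, map_smul, map_smul, cconj_one, hω, smul_neg, neg_add] at hξ
        exact add_right_cancel hξ
      rw [SetLike.mem_coe, ha, zero_add]
      exact Submodule.smul_mem _ _ (Submodule.mem_span_singleton_self _)
    · intro hξ
      obtain ⟨c, rfl⟩ := Submodule.mem_span_singleton.mp hξ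
      exact ⟨by rw [map_smul, hω, smul_neg],
        fun η _ => ((commute_eI_univ hb (by rw [Nat.odd_iff]; omega) η).smul_left c).eq⟩

theorem stmt17 {F V : Type*} [Field F] [AddCommGroup V] [Module F V]
    [FiniteDimensional F V] (h2 : (2 : F) ≠ 0)
    (B : LinearMap.BilinForm F V)
    (hsymm : ∀ v w : V, B v w = B w v)
    (hnd : ∀ v : V, (∀ w : V, B v w = 0) → v = 0)
    (Qf : QuadraticForm F V) (hQ : ∀ v : V, Qf v = -(B v v))
    {n : ℕ} (b : Module.Basis (Fin n) F V)
    (hortho : ∀ i j : Fin n, i ≠ j → B (b i) (b j) = 0) :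
    ((Even n ∨ n % 4 = 3) →
      {ξ : CliffordAlgebra Qf | cconj Qf ξ = -ξ ∧
          ∀ η : CliffordAlgebra Qf, cconj Qf η = -η → ξ * η = η * ξ} = {0}) ∧
    (n % 4 = 1 →
      {ξ : CliffordAlgebra Qf | cconj Qf ξ = -ξ ∧
          ∀ η : CliffordAlgebra Qf, cconj Qf η = -η → ξ * η = η * ξ}
        = ↑(Submodule.span F {eI Qf b Finset.univ})) :=
  stmt17_general h2 B hnd Qf hQ b hortho
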